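/- For a decomposable (chordal) Markov random field with positive joint density satisfying the global Markov property, the joint density factorizes as the product of the marginal densities over the cliques divided by the product of the marginal densities over the separators (with multiplicity), where the cliques are taken along a perfect sequence. -/

import Mathlib

open SimpleGraph MeasureTheory

/-- A graph is chordal if every cycle of length ≥ 4 has a chord. -/
def IsChordal {V : Type*} (G : SimpleGraph V) : Prop :=
  ∀ (v : V) (w : G.Walk v v), w.IsCycle → 4 ≤ w.length →
    ∃ a b, a ∈ w.support ∧ b ∈ w.support ∧ G.Adj a b ∧ s(a, b) ∉ w.edges

/-- A maximal complete set of vertices. -/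
def IsMaxClique {V : Type*} (G : SimpleGraph V) (s : Set V) : Prop :=
  G.IsClique s ∧ ∀ t : Set V, G.IsClique t → s ⊆ t → t = s

open Classical in
/-- The marginal density of `p` on the coordinates in `A`, obtained by
integrating out the coordinates outside `A` (Lebesgue product measure). -/
noncomputable def marginal {V : Type*} [Fintype V] (p : (V → ℝ) → ℝ)
    (A : Set V) (x : V → ℝ) : ℝ :=
  ∫ y : ↥(Aᶜ) → ℝ, p (fun v => if h : v ∈ A then x v else y ⟨v, h⟩)

/-- `C` separates `A` and `B` in `G`: every walk from `A` to `B` meets `C`. -/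
def Separates {V : Type*} (G : SimpleGraph V) (A B C : Set V) : Prop :=
  ∀ a ∈ A, ∀ b ∈ B, ∀ w : G.Walk a b, ∃ c ∈ C, c ∈ w.support

/-- The global Markov property for the density `p` with respect to `G`. -/
def GlobalMarkov {V : Type*} [Fintype V] (G : SimpleGraph V)
    (p : (V → ℝ) → ℝ) : Prop :=
  ∀ A B C : Set V, Disjoint A B → Separates G A B C →
    ∀ x, marginal p (A ∪ B ∪ C) x * marginal p C x
          = marginal p (A ∪ C) x * marginal p (B ∪ C) x

/-!
Write `D n = C 0 ∪ ⋯ ∪ C (n-1)` and `S n = C n ∩ D n`. Every edge of `G` lies in a maximal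
clique, hence in some `C k`. Along the perfect sequence, `S j` cuts the cliques `C 0, …, C (n-1)`
into a `C j`-side and a `D j`-side for every `n > j`: the next clique `C n` meets the earlier ones
inside a single earlier clique, so it can join that clique's side. Hence `S j` separates
`C j \ D j` from `D j \ C j` in `G`, and the global Markov property yields
`p(x_{D (j+1)}) p(x_{S j}) = p(x_{C j}) p(x_{D j})`. These identities telescope, and `D m = V`.
-/

lemma marginal_univ {V : Type*} [Fintype V] (p : (V → ℝ) → ℝ) (x : V → ℝ) :
    marginal p Set.univ x = p x := by
  simp [marginal, Measure.real, volume_pi]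

theorem Finset.prod_range_telescope {M : Type*} [CommMonoid M] {d s c : ℕ → M} {m : ℕ}
    (hm : 0 < m) (h1 : d 1 = c 0) (hstep : ∀ n, 0 < n → n < m → d (n + 1) * s n = c n * d n) :
    d m * ∏ i ∈ range m, (if 0 < i then s i else 1) = ∏ i ∈ range m, c i := by
  induction m, hm using Nat.le_induction with
  | base => simp [h1]
  | succ n hn ih =>
    rw [prod_range_succ, prod_range_succ, if_pos (Nat.succ_le_iff.1 hn),
      ← ih fun k hk hkn => hstep k hk (hkn.trans n.lt_succ_self), mul_comm _ (s n), ← mul_assoc,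
      hstep n hn n.lt_succ_self]
    ac_rfl

theorem biUnion_lt_eq_biUnion_fin {α : Type*} {m : ℕ} {c : ℕ → Set α} {C : Fin m → Set α}
    (hc : ∀ i : Fin m, c i = C i) {n : ℕ} (hn : n ≤ m) :
    ⋃ k < n, c k = ⋃ (k : Fin m) (_ : (k : ℕ) < n), C k := by
  ext v
  simp only [Set.mem_iUnion]
  constructor
  · rintro ⟨k, hk, hv⟩
    exact ⟨⟨k, hk.trans_le hn⟩, hk, hc ⟨k, _⟩ ▸ hv⟩
  · rintro ⟨k, hk, hv⟩
    exact ⟨k, hk, (hc k).symm ▸ hv⟩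

section Decomposition

variable {V : Type*} {G : SimpleGraph V}

theorem isMaxClique_of_maximal {s : Set V} (h : Maximal G.IsClique s) : IsMaxClique G s :=
  ⟨h.prop, fun _ ht hst => (h.eq_of_le ht hst).symm⟩

theorem exists_isMaxClique_of_adj [Finite V] {u w : V} (h : G.Adj u w) :
    ∃ s, IsMaxClique G s ∧ u ∈ s ∧ w ∈ s := by
  obtain ⟨s, hsub, hmax⟩ := Finite.exists_le_maximal (isClique_pair.2 fun _ => h)
  exact ⟨s, isMaxClique_of_maximal hmax, hsub (by simp), hsub (by simp)⟩

theorem Separates.mono {A B S A' B' : Set V} (h : Separates G A B S) (hA : A' ⊆ A)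
    (hB : B' ⊆ B) : Separates G A' B' S :=
  fun a ha b hb => h a (hA ha) b (hB hb)

theorem separates_of_adj_closed {A B S : Set V} (hAB : Disjoint A B)
    (hA : ∀ u w, u ∈ A → G.Adj u w → w ∈ A ∨ w ∈ S) : Separates G A B S := by
  intro a ha b hb w
  induction w with
  | nil => exact absurd hb (Set.disjoint_left.1 hAB ha)
  | cons hadj q ih =>
    rcases hA _ _ ha hadj with hv | hv
    · obtain ⟨c, hcS, hc⟩ := ih hv hb
      exact ⟨c, hcS, Walk.support_cons _ _ ▸ List.mem_cons_of_mem _ hc⟩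
    · exact ⟨_, hv, by simp⟩

/-- `S` cuts the sets `c 0, …, c (n-1)` into an `A`-side and a `B`-side. -/
structure SplitsSets (c : ℕ → Set V) (n : ℕ) (A B S : Set V) : Prop where
  disjoint : Disjoint A B
  disjoint_left : Disjoint A S
  disjoint_right : Disjoint B S
  subset_left : A ⊆ ⋃ k < n, c k
  subset_right : B ⊆ ⋃ k < n, c k
  sep_subset : S ⊆ ⋃ k < n, c k
  subset_or : ∀ k < n, c k ⊆ A ∪ S ∨ c k ⊆ B ∪ S

namespace SplitsSets

variable {c : ℕ → Set V} {n : ℕ} {A B S : Set V}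

theorem symm (h : SplitsSets c n A B S) : SplitsSets c n B A S :=
  ⟨h.disjoint.symm, h.disjoint_right, h.disjoint_left, h.subset_right, h.subset_left,
    h.sep_subset, fun k hk => (h.subset_or k hk).symm⟩

theorem self_succ (j : ℕ) :
    SplitsSets c (j + 1) (c j \ ⋃ k < j, c k) ((⋃ k < j, c k) \ c j)
      (c j ∩ ⋃ k < j, c k) where
  disjoint := disjoint_sdiff_sdiff
  disjoint_left := Set.disjoint_sdiff_left.mono_right Set.inter_subset_right
  disjoint_right := Set.disjoint_sdiff_left.mono_right Set.inter_subset_left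
  subset_left := by
    rw [Set.biUnion_lt_succ]; exact Set.sdiff_subset.trans Set.subset_union_right
  subset_right := by
    rw [Set.biUnion_lt_succ]; exact Set.sdiff_subset.trans Set.subset_union_left
  sep_subset := by
    rw [Set.biUnion_lt_succ]; exact Set.inter_subset_left.trans Set.subset_union_right
  subset_or k hk := by
    rcases Nat.lt_succ_iff_lt_or_eq.1 hk with hk | rfl
    · right
      intro v hv
      by_cases hvj : v ∈ c j
      · exact Or.inr ⟨hvj, Set.mem_biUnion hk hv⟩
      · exact Or.inl ⟨Set.mem_biUnion hk hv, hvj⟩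
    · left
      rw [Set.sdiff_union_inter]

theorem extend_left (h : SplitsSets c n A B S) (hn : c n ∩ ⋃ k < n, c k ⊆ A ∪ S) :
    SplitsSets c (n + 1) (A ∪ (c n \ ⋃ k < n, c k)) B S where
  disjoint := h.disjoint.union_left (Set.disjoint_sdiff_left.mono_right h.subset_right)
  disjoint_left := h.disjoint_left.union_left (Set.disjoint_sdiff_left.mono_right h.sep_subset)
  disjoint_right := h.disjoint_right
  subset_left := by
    rw [Set.biUnion_lt_succ]; exact Set.union_subset_union h.subset_left Set.sdiff_subset
  subset_right := by rw [Set.biUnion_lt_succ]; exact h.subset_right.trans Set.subset_union_left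
  sep_subset := by rw [Set.biUnion_lt_succ]; exact h.sep_subset.trans Set.subset_union_left
  subset_or k hk := by
    rcases Nat.lt_succ_iff_lt_or_eq.1 hk with hk | rfl
    · exact (h.subset_or k hk).imp_left fun hA =>
        hA.trans (Set.union_subset_union_left S Set.subset_union_left)
    · left
      intro v hv
      by_cases hvD : v ∈ ⋃ i < k, c i
      · exact (hn ⟨hv, hvD⟩).imp_left Or.inl
      · exact Or.inl (Or.inr ⟨hv, hvD⟩)

theorem separates (h : SplitsSets c n A B S)
    (hedge : ∀ u w, G.Adj u w → ∃ k < n, u ∈ c k ∧ w ∈ c k) : Separates G A B S := by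
  refine separates_of_adj_closed h.disjoint fun u w hu huw => ?_
  obtain ⟨k, hk, huk, hwk⟩ := hedge u w huw
  refine (h.subset_or k hk).elim (fun hA => hA hwk) fun hB => ?_
  rcases hB huk with hu' | hu'
  · exact absurd hu' (Set.disjoint_left.1 h.disjoint hu)
  · exact absurd hu' (Set.disjoint_left.1 h.disjoint_left hu)

end SplitsSets

variable {c : ℕ → Set V}

theorem exists_splitsSets {j n : ℕ} (hjn : j < n)
    (hrip : ∀ i, j < i → i < n → ∃ ρ < i, c i ∩ ⋃ k < i, c k ⊆ c ρ) :
    ∃ A B, c j \ (⋃ k < j, c k) ⊆ A ∧ (⋃ k < j, c k) \ c j ⊆ B ∧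
      SplitsSets c n A B (c j ∩ ⋃ k < j, c k) := by
  induction n, hjn using Nat.le_induction with
  | base => exact ⟨_, _, subset_rfl, subset_rfl, SplitsSets.self_succ j⟩
  | succ n hjn ih =>
    obtain ⟨A, B, hA, hB, h⟩ := ih fun i hji hin => hrip i hji (hin.trans n.lt_succ_self)
    obtain ⟨ρ, hρ, hsub⟩ := hrip n hjn n.lt_succ_self
    rcases h.subset_or ρ hρ with hρA | hρB
    · exact ⟨_, B, hA.trans Set.subset_union_left, hB, h.extend_left (hsub.trans hρA)⟩
    · exact ⟨A, _, hA, hB.trans Set.subset_union_left,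
        (h.symm.extend_left (hsub.trans hρB)).symm⟩

theorem separates_of_runningIntersection {j n : ℕ} (hjn : j < n)
    (hrip : ∀ i, j < i → i < n → ∃ ρ < i, c i ∩ ⋃ k < i, c k ⊆ c ρ)
    (hedge : ∀ u w, G.Adj u w → ∃ k < n, u ∈ c k ∧ w ∈ c k) :
    Separates G (c j \ ⋃ k < j, c k) ((⋃ k < j, c k) \ c j) (c j ∩ ⋃ k < j, c k) := by
  obtain ⟨A, B, hA, hB, h⟩ := exists_splitsSets hjn hrip
  exact (h.separates hedge).mono hA hB

end Decomposition

namespace GlobalMarkov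

variable {V : Type*} [Fintype V] {G : SimpleGraph V} {p : (V → ℝ) → ℝ}

theorem marginal_union_mul (hGM : GlobalMarkov G p) {X Y : Set V}
    (hsep : Separates G (X \ Y) (Y \ X) (X ∩ Y)) (x : V → ℝ) :
    marginal p (X ∪ Y) x * marginal p (X ∩ Y) x = marginal p X x * marginal p Y x := by
  have h := hGM _ _ _ disjoint_sdiff_sdiff hsep x
  rwa [← Set.union_eq_sdiff_union_sdiff_union_inter, Set.sdiff_union_inter, Set.inter_comm,
    Set.sdiff_union_inter, Set.inter_comm Y X] at h

theorem mul_prod_marginal_separators (hGM : GlobalMarkov G p) {c : ℕ → Set V} {m : ℕ}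
    (hm : 0 < m) (hall : ∀ s, IsMaxClique G s → ∃ k < m, c k = s)
    (hcover : ⋃ k < m, c k = Set.univ)
    (hrip : ∀ i, 0 < i → i < m → ∃ j < i, c i ∩ ⋃ k < i, c k ⊆ c j) (x : V → ℝ) :
    p x * ∏ i ∈ Finset.range m, (if 0 < i then marginal p (c i ∩ ⋃ k < i, c k) x else 1)
      = ∏ i ∈ Finset.range m, marginal p (c i) x := by
  have hedge : ∀ u w, G.Adj u w → ∃ k < m, u ∈ c k ∧ w ∈ c k := fun u w huw => by
    obtain ⟨s, hs, hu, hw⟩ := exists_isMaxClique_of_adj huw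
    obtain ⟨k, hk, rfl⟩ := hall s hs
    exact ⟨k, hk, hu, hw⟩
  have hstep : ∀ n, 0 < n → n < m →
      marginal p (⋃ k < n + 1, c k) x * marginal p (c n ∩ ⋃ k < n, c k) x
        = marginal p (c n) x * marginal p (⋃ k < n, c k) x := by
    intro n hn hnm
    rw [Set.biUnion_lt_succ, Set.union_comm]
    exact hGM.marginal_union_mul
      (separates_of_runningIntersection hnm (fun i hni hi => hrip i (hn.trans hni) hi) hedge) x
  rw [← marginal_univ p x, ← hcover]
  exact Finset.prod_range_telescope (d := fun n => marginal p (⋃ k < n, c k) x) hm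
    (by simp only [Nat.lt_one_iff, Set.iUnion_iUnion_eq_left]) hstep

end GlobalMarkov

theorem chordal_mrf_factorization_general {V : Type*} [Fintype V]
    (G : SimpleGraph V)
    (p : (V → ℝ) → ℝ) (hGM : GlobalMarkov G p)
    (m : ℕ) (hm : 0 < m) (C : Fin m → Set V)
    (hall : ∀ s : Set V, IsMaxClique G s → ∃ i, C i = s)
    (hcover : (⋃ i, C i) = Set.univ)
    (hrip : ∀ i : Fin m, 0 < (i : ℕ) →
      ∃ j, j < i ∧ (C i ∩ ⋃ k < i, C k) ⊆ C j) :
    ∀ x, p x * ∏ i : Fin m,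
        (if 0 < (i : ℕ) then marginal p (C i ∩ ⋃ k < i, C k) x else 1)
      = ∏ i : Fin m, marginal p (C i) x := by
  intro x
  obtain ⟨c, hc⟩ : ∃ c : ℕ → Set V, ∀ i : Fin m, c i = C i :=
    ⟨Function.extend Fin.val C ⊥, Fin.val_injective.extend_apply C ⊥⟩
  have hprefix : ∀ i : Fin m, ⋃ k < i, C k = ⋃ k < (i : ℕ), c k := fun i => by
    simp only [biUnion_lt_eq_biUnion_fin hc i.isLt.le, Fin.lt_def]
  simp only [hprefix]
  simp only [← hc]
  rw [Fin.prod_univ_eq_prod_range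
      (fun i => if 0 < i then marginal p (c i ∩ ⋃ k < i, c k) x else 1),
    Fin.prod_univ_eq_prod_range (fun i => marginal p (c i) x)]
  refine hGM.mul_prod_marginal_separators hm (fun s hs => ?_) ?_ (fun i hi him => ?_) x
  · obtain ⟨i, rfl⟩ := hall s hs
    exact ⟨i, i.isLt, hc i⟩
  · rw [biUnion_lt_eq_biUnion_fin hc le_rfl, ← hcover]
    simp only [Fin.is_lt, Set.iUnion_true]
  · obtain ⟨j, hji, hj⟩ := hrip ⟨i, him⟩ hi
    exact ⟨j, hji, by simp only [hprefix] at hj; simpa only [← hc] using hj⟩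

/-- For a decomposable (chordal) Markov random field with positive density
satisfying the global Markov property, the joint density factorizes as the
product of the clique marginals divided by the product of the separator
marginals, along a perfect sequence of the cliques:
`p(x) · ∏_{i≥2} p(x_{S_i}) = ∏_i p(x_{C_i})`. -/
theorem chordal_mrf_factorization {V : Type*} [Fintype V]
    (G : SimpleGraph V) (hG : IsChordal G)
    (p : (V → ℝ) → ℝ) (hpos : ∀ x, 0 < p x) (hGM : GlobalMarkov G p)
    (m : ℕ) (hm : 0 < m) (C : Fin m → Set V)
    (hmax : ∀ i, IsMaxClique G (C i))
    (hall : ∀ s : Set V, IsMaxClique G s → ∃ i, C i = s)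
    (hcover : (⋃ i, C i) = Set.univ)
    (hrip : ∀ i : Fin m, 0 < (i : ℕ) →
      ∃ j, j < i ∧ (C i ∩ ⋃ k < i, C k) ⊆ C j) :
    ∀ x, p x * ∏ i : Fin m,
        (if 0 < (i : ℕ) then marginal p (C i ∩ ⋃ k < i, C k) x else 1)
      = ∏ i : Fin m, marginal p (C i) x :=
  chordal_mrf_factorization_general G p hGM m hm C hall hcover hrip
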